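/- arXiv:1702.05276 — 2 statements merged into one kernel-verified Lean document; each statement's English description precedes it below -/
import Mathlib

section
/- Let T ∈ L(H) be an operator on a separable infinite-dimensional complex Hilbert space H. If the essential spectrum σ_e(T; H) = {λ ∈ ℂ : T − λI is not Fredholm} has empty interior, then T is not a universal operator. -/
/-!
Apply universality of `T` to an operator `B` for which every `μ` in the open unit disc is an
eigenvalue of infinite multiplicity: identifying `H` with `ℓ²(ι)` and `ι` with `ι × ℕ`, take the
backward shift along every row `{i} × ℕ`, whose `μ`-eigenvectors include the geometric rows
`(μ ^ n)ₙ`. As `T` restricted to an invariant subspace is similar to `c • B`, every `z` with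
`‖z‖ < ‖c‖` is an eigenvalue of `T` of infinite multiplicity, so `T - z` is not Fredholm and
the essential spectrum of `T` contains a disc.
-/

noncomputable section

/-- Universal operator on a complex Hilbert space. -/
def IsUniversal {H : Type*} [NormedAddCommGroup H] [InnerProductSpace ℂ H]
    (U : H →L[ℂ] H) : Prop :=
  ∀ T : H →L[ℂ] H, ∃ M : Submodule ℂ H, IsClosed (M : Set H) ∧ (∀ x ∈ M, U x ∈ M) ∧
    ∃ c : ℂ, c ≠ 0 ∧ ∃ J : H ≃L[ℂ] M, ∀ x : H, U (J x : H) = c • ((J (T x) : H))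

/-- A bounded operator is Fredholm if its kernel is finite-dimensional and its range is
closed of finite codimension. -/
def IsFredholmOp {H : Type*} [NormedAddCommGroup H] [InnerProductSpace ℂ H]
    (S : H →L[ℂ] H) : Prop :=
  FiniteDimensional ℂ (LinearMap.ker (S : H →ₗ[ℂ] H)) ∧ IsClosed (LinearMap.range (S : H →ₗ[ℂ] H) : Set H) ∧
    FiniteDimensional ℂ (H ⧸ LinearMap.range (S : H →ₗ[ℂ] H))

/-- The essential spectrum of an operator. -/
def essentialSpectrum {H : Type*} [NormedAddCommGroup H] [InnerProductSpace ℂ H]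
    (T : H →L[ℂ] H) : Set ℂ :=
  {z : ℂ | ¬ IsFredholmOp (T - z • (1 : H →L[ℂ] H))}

open Function

theorem Module.End.not_finiteDimensional_eigenspace_of_intertwining {K V W : Type*} [Field K]
    [AddCommGroup V] [Module K V] [AddCommGroup W] [Module K W] {f : End K V} {g : End K W}
    {J : V →ₗ[K] W} (hJ : Function.Injective J) {c : K} (h : ∀ x, g (J x) = c • J (f x)) {μ : K}
    (hμ : ¬ FiniteDimensional K (f.eigenspace μ)) :
    ¬ FiniteDimensional K (g.eigenspace (c * μ)) := by
  have hmaps : ∀ x ∈ f.eigenspace μ, J x ∈ g.eigenspace (c * μ) := by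
    intro x hx
    rw [End.mem_eigenspace_iff] at hx ⊢
    rw [h, hx, map_smul, smul_smul]
  exact fun _ => hμ <| Module.Finite.of_injective (J.restrict hmaps) fun _ _ hxy =>
    Subtype.ext (hJ (congrArg Subtype.val hxy))

theorem mem_essentialSpectrum_of_not_finiteDimensional_eigenspace {H : Type*}
    [NormedAddCommGroup H] [InnerProductSpace ℂ H] {T : H →L[ℂ] H} {z : ℂ}
    (h : ¬ FiniteDimensional ℂ (Module.End.eigenspace T.toLinearMap z)) :
    z ∈ essentialSpectrum T := by
  have hker : LinearMap.ker ((T - z • 1 : H →L[ℂ] H) : H →ₗ[ℂ] H) =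
      Module.End.eigenspace T.toLinearMap z := by
    ext x
    simp [sub_eq_zero]
  exact fun hT => h (hker ▸ hT.1)

theorem Memℓp.comp_of_injective {ι κ E : Type*} [NormedAddCommGroup E] {p : ENNReal}
    {f : ι → E} (hf : Memℓp f p) {σ : κ → ι} (hσ : Injective σ) (hp : 0 < p.toReal) :
    Memℓp (f ∘ σ) p :=
  memℓp_gen ((hf.summable hp).comp_injective hσ)

namespace lp

section Comp

variable {ι E : Type*} [NormedAddCommGroup E] {p : ENNReal} [Fact (1 ≤ p)]
  (𝕜 : Type*) [NormedField 𝕜] [NormedSpace 𝕜 E] {σ : ι → ι}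

def compCLM (hσ : Injective σ) (hp : p ≠ ⊤) :
    lp (fun _ : ι => E) p →L[𝕜] lp (fun _ : ι => E) p :=
  have hp' : 0 < p.toReal := p.toReal_pos_iff_ne_top.mpr hp
  LinearMap.mkContinuous
    { toFun := fun f => ⟨f ∘ σ, (lp.memℓp f).comp_of_injective hσ hp'⟩
      map_add' := fun _ _ => rfl
      map_smul' := fun _ _ => rfl }
    1 fun f => by
      rw [one_mul]
      refine lp.norm_le_of_tsum_le hp' (norm_nonneg f) ?_
      rw [lp.norm_rpow_eq_tsum hp' f]
      exact tsum_comp_le_tsum_of_inj ((lp.memℓp f).summable hp')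
        (fun _ => Real.rpow_nonneg (norm_nonneg _) _) hσ

theorem compCLM_apply (hσ : Injective σ) (hp : p ≠ ⊤) (f : lp (fun _ : ι => E) p) (i : ι) :
    compCLM 𝕜 hσ hp f i = f (σ i) := rfl

end Comp

section BackwardShift

open scoped Classical

variable {ι : Type*} (𝕜 : Type*) [NormedField 𝕜] {p : ENNReal} [Fact (1 ≤ p)]
  (τ : ι ≃ ι × ℕ) (hp : p ≠ ⊤)

def backwardShift : lp (fun _ : ι => 𝕜) p →L[𝕜] lp (fun _ : ι => 𝕜) p :=
  compCLM 𝕜 (σ := τ.symm ∘ Prod.map id Nat.succ ∘ τ)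
    (τ.symm.injective.comp ((injective_id.prodMap Nat.succ_injective).comp τ.injective)) hp

variable {𝕜}

def geometricRow {μ : 𝕜} (hμ : ‖μ‖ < 1) (i : ι) : lp (fun _ : ι => 𝕜) p :=
  have hp' : 0 < p.toReal := p.toReal_pos_iff_ne_top.mpr hp
  let g : ι × ℕ → 𝕜 := fun x => if x.1 = i then μ ^ x.2 else 0
  have hg : Memℓp g p := by
    have hvanish : ∀ x ∉ Set.range (Prod.mk i), ‖g x‖ ^ p.toReal = 0 := fun x hx => by
      have : x.1 ≠ i := fun h => hx ⟨x.2, by rw [← h]⟩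
      simp [g, this, Real.zero_rpow hp'.ne']
    refine memℓp_gen (((Prod.mk_right_injective i).summable_iff hvanish).mp ?_)
    have hr : ‖μ‖ ^ p.toReal < 1 := Real.rpow_lt_one (norm_nonneg μ) hμ hp'
    convert summable_geometric_of_lt_one (by positivity) hr using 1
    ext n
    simp [g, Real.rpow_pow_comm (norm_nonneg μ)]
  ⟨g ∘ τ, hg.comp_of_injective τ.injective hp'⟩

theorem geometricRow_apply {μ : 𝕜} (hμ : ‖μ‖ < 1) (i j : ι) :
    geometricRow τ hp hμ i j = if (τ j).1 = i then μ ^ (τ j).2 else 0 := rfl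

theorem backwardShift_geometricRow {μ : 𝕜} (hμ : ‖μ‖ < 1) (i : ι) :
    backwardShift 𝕜 τ hp (geometricRow τ hp hμ i) = μ • geometricRow τ hp hμ i := by
  ext j
  rw [coeFn_smul, Pi.smul_apply, smul_eq_mul]
  simp only [backwardShift, compCLM_apply, geometricRow_apply]
  split_ifs <;> simp_all [pow_succ']

theorem linearIndependent_geometricRow {μ : 𝕜} (hμ : ‖μ‖ < 1) :
    LinearIndependent 𝕜 (geometricRow τ hp hμ) := by
  refine linearIndependent_iff'.mpr fun s a hsum i hi => ?_
  have := congrArg (fun f : lp (fun _ : ι => 𝕜) p => f (τ.symm (i, 0))) hsum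
  simp only [coeFn_sum, Finset.sum_apply, coeFn_smul, Pi.smul_apply, smul_eq_mul,
    geometricRow_apply] at this
  simpa [hi] using this

theorem not_finiteDimensional_eigenspace_backwardShift [Nonempty ι] {μ : 𝕜} (hμ : ‖μ‖ < 1) :
    ¬ FiniteDimensional 𝕜 (Module.End.eigenspace (backwardShift 𝕜 τ hp).toLinearMap μ) := by
  have : Infinite ι := τ.infinite_iff.mpr inferInstance
  intro hfin
  refine Module.Finite.not_linearIndependent_of_infinite
    (fun i => (⟨geometricRow τ hp hμ i, ?_⟩ :
      Module.End.eigenspace (backwardShift 𝕜 τ hp).toLinearMap μ))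
    (LinearIndependent.of_comp (Submodule.subtype _) (linearIndependent_geometricRow τ hp hμ))
  exact Module.End.mem_eigenspace_iff.mpr (backwardShift_geometricRow τ hp hμ i)

end BackwardShift

end lp

theorem HilbertBasis.finiteDimensional {ι 𝕜 E : Type*} [RCLike 𝕜] [NormedAddCommGroup E]
    [InnerProductSpace 𝕜 E] [Finite ι] (b : HilbertBasis ι 𝕜 E) : FiniteDimensional 𝕜 E :=
  have := Fintype.ofFinite ι
  Module.Finite.of_basis b.toOrthonormalBasis.toBasis

theorem nonempty_equiv_prod_nat (ι : Type*) [Infinite ι] : Nonempty (ι ≃ ι × ℕ) :=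
  Cardinal.eq.mp (by simp)

theorem exists_forall_not_finiteDimensional_eigenspace {𝕜 H : Type*} [RCLike 𝕜]
    [NormedAddCommGroup H] [InnerProductSpace 𝕜 H] [CompleteSpace H]
    (hH : ¬ FiniteDimensional 𝕜 H) :
    ∃ B : H →L[𝕜] H, ∀ μ : 𝕜, ‖μ‖ < 1 →
      ¬ FiniteDimensional 𝕜 (Module.End.eigenspace B.toLinearMap μ) := by
  obtain ⟨w, b, -⟩ := exists_hilbertBasis 𝕜 H
  have : Infinite w := not_finite_iff_infinite.mp fun _ => hH b.finiteDimensional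
  obtain ⟨τ⟩ := nonempty_equiv_prod_nat w
  let e := b.repr.toContinuousLinearEquiv
  let S := lp.backwardShift 𝕜 τ (p := 2) ENNReal.ofNat_ne_top
  let B : H →L[𝕜] H := e.symm.toContinuousLinearMap ∘L S ∘L e.toContinuousLinearMap
  have hB : ∀ x, B (e.symm x) = (1 : 𝕜) • e.symm (S x) := fun x => by
    simp only [B, ContinuousLinearMap.comp_apply, ContinuousLinearEquiv.coe_coe,
      ContinuousLinearEquiv.apply_symm_apply, one_smul]
  refine ⟨B, fun μ hμ => ?_⟩
  have := Module.End.not_finiteDimensional_eigenspace_of_intertwining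
    (g := B.toLinearMap) (J := e.symm.toLinearEquiv.toLinearMap) e.symm.injective hB
    (lp.not_finiteDimensional_eigenspace_backwardShift τ ENNReal.ofNat_ne_top hμ)
  rwa [one_mul] at this

theorem IsUniversal.interior_essentialSpectrum_nonempty {H : Type*} [NormedAddCommGroup H]
    [InnerProductSpace ℂ H] {U : H →L[ℂ] H} (hU : IsUniversal U) {B : H →L[ℂ] H}
    (hB : ∀ μ : ℂ, ‖μ‖ < 1 → ¬ FiniteDimensional ℂ (Module.End.eigenspace B.toLinearMap μ)) :
    (interior (essentialSpectrum U)).Nonempty := by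
  obtain ⟨M, -, -, c, hc, J, hJ⟩ := hU B
  have hc' : 0 < ‖c‖ := norm_pos_iff.mpr hc
  have hball : Metric.ball 0 ‖c‖ ⊆ essentialSpectrum U := fun z hz => by
    have hμ : ‖z / c‖ < 1 := by rwa [norm_div, div_lt_one hc', ← mem_ball_zero_iff]
    apply mem_essentialSpectrum_of_not_finiteDimensional_eigenspace
    have hz : c * (z / c) = z := mul_div_cancel₀ z hc
    have := Module.End.not_finiteDimensional_eigenspace_of_intertwining
        (J := M.subtype ∘ₗ J.toLinearEquiv.toLinearMap)
        (Subtype.val_injective.comp J.injective) hJ (hB _ hμ)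
    rwa [hz] at this
  exact ⟨0, interior_maximal hball Metric.isOpen_ball (Metric.mem_ball_self hc')⟩

theorem not_universal_of_interior_essentialSpectrum_empty_general {H : Type*} [NormedAddCommGroup H]
    [InnerProductSpace ℂ H] [CompleteSpace H]
    (hinf : ¬ FiniteDimensional ℂ H)
    (T : H →L[ℂ] H) (h : interior (essentialSpectrum T) = ∅) :
    ¬ IsUniversal T := by
  intro hU
  obtain ⟨B, hB⟩ := exists_forall_not_finiteDimensional_eigenspace hinf
  simpa [h] using hU.interior_essentialSpectrum_nonempty hB

/-- If the essential spectrum of `T` has empty interior, then `T` is not universal. -/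
theorem not_universal_of_interior_essentialSpectrum_empty {H : Type*} [NormedAddCommGroup H]
    [InnerProductSpace ℂ H] [CompleteSpace H] [TopologicalSpace.SeparableSpace H]
    (hinf : ¬ FiniteDimensional ℂ H)
    (T : H →L[ℂ] H) (h : interior (essentialSpectrum T) = ∅) :
    ¬ IsUniversal T :=
  not_universal_of_interior_essentialSpectrum_empty_general hinf T h

end
end

section
/- Let U be a universal operator on a separable infinite-dimensional complex Hilbert space H and let K ∈ L(H) be an injective compact operator. On H ⊕ H define V(x,y) = (Ux + y, 0) and W(x,y) = (Ux + y, Kx). Then V is universal on H ⊕ H, the difference W − V is a compact operator, and W is injective, hence W is not universal. Consequently, the class of universal operators is not invariant under compact perturbations. -/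
noncomputable section

/-- The element `(x, y)` of the Hilbert-space direct sum `H ⊕ H`. -/
def mkPair {H : Type*} [NormedAddCommGroup H] [InnerProductSpace ℂ H] (x y : H) :
    WithLp 2 (H × H) :=
  (WithLp.equiv 2 (H × H)).symm (x, y)

/-! `x ↦ (x, 0)` intertwines `U` with `V`, so `U` sits inside `V` on the closed subspace `H ⊕ 0`.
As `H ⊕ H` and `H` are both isometric to `ℓ²(ℕ)`, an operator on `H ⊕ H` can be transported to `H`,
realised there inside `U`, and the realisation pushed into `H ⊕ 0`: hence `V` is universal.
`W - V = (0, K₀ ∘ fst)` is compact, and `W` is injective because `K₀` is. An injective operator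
is never universal: realising the zero operator inside it would make it vanish on a nonzero
subspace. -/

open TopologicalSpace

theorem Orthonormal.countable {𝕜 E ι : Type*} [RCLike 𝕜] [NormedAddCommGroup E]
    [InnerProductSpace 𝕜 E] [SeparableSpace E] {v : ι → E} (hv : Orthonormal 𝕜 v) :
    Countable ι := by
  have one_lt_dist : Pairwise fun i j => 1 < dist (v i) (v j) := by
    intro i j hij
    have hsq : ‖v i - v j‖ ^ 2 = 2 := by
      rw [@norm_sub_sq 𝕜, hv.2 hij, hv.1 i, hv.1 j]
      norm_num
    rw [dist_eq_norm]
    nlinarith [norm_nonneg (v i - v j)]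
  refine Pairwise.countable_of_isOpen_disjoint (s := fun i => Metric.ball (v i) (1 / 2))
    (fun i j hij => Metric.ball_disjoint_ball ?_) (fun _ => Metric.isOpen_ball)
    (fun _ => Metric.nonempty_ball.2 (by norm_num))
  linarith [one_lt_dist hij]

theorem nonempty_linearIsometryEquiv_lp_nat {𝕜 E : Type*} [RCLike 𝕜] [NormedAddCommGroup E]
    [InnerProductSpace 𝕜 E] [CompleteSpace E] [SeparableSpace E]
    (hE : ¬ FiniteDimensional 𝕜 E) : Nonempty (E ≃ₗᵢ[𝕜] lp (fun _ : ℕ => 𝕜) 2) := by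
  obtain ⟨w, b, -⟩ := exists_hilbertBasis 𝕜 E
  have : Countable w := b.orthonormal.countable
  have : Infinite w := by
    refine not_finite_iff_infinite.1 fun _ => hE ?_
    have := Fintype.ofFinite w
    exact .of_basis b.toOrthonormalBasis.toBasis
  obtain ⟨e⟩ : Nonempty (w ≃ ℕ) := nonempty_equiv_of_countable
  have hsp : ⊤ ≤ (Submodule.span 𝕜 (Set.range (b ∘ e.symm))).topologicalClosure := by
    rw [Set.range_comp, e.symm.surjective.range_eq, Set.image_univ]
    exact b.dense_span.ge
  exact ⟨(HilbertBasis.mk (b.orthonormal.comp _ e.symm.injective) hsp).repr⟩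

theorem nonempty_continuousLinearEquiv_of_not_finiteDimensional {𝕜 E F : Type*} [RCLike 𝕜]
    [NormedAddCommGroup E] [InnerProductSpace 𝕜 E] [CompleteSpace E] [SeparableSpace E]
    [NormedAddCommGroup F] [InnerProductSpace 𝕜 F] [CompleteSpace F] [SeparableSpace F]
    (hE : ¬ FiniteDimensional 𝕜 E) (hF : ¬ FiniteDimensional 𝕜 F) : Nonempty (E ≃L[𝕜] F) := by
  obtain ⟨eE⟩ := nonempty_linearIsometryEquiv_lp_nat hE
  obtain ⟨eF⟩ := nonempty_linearIsometryEquiv_lp_nat hF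
  exact ⟨(eE.trans eF.symm).toContinuousLinearEquiv⟩

namespace WithLp

variable (p : ENNReal) [Fact (1 ≤ p)] (𝕜 E F : Type*) [NormedField 𝕜]
  [NormedAddCommGroup E] [NormedSpace 𝕜 E] [NormedAddCommGroup F] [NormedSpace 𝕜 F]

def inlₗᵢ : E →ₗᵢ[𝕜] WithLp p (E × F) where
  toFun x := toLp p (x, 0)
  map_add' x y := by rw [← toLp_add, Prod.mk_add_mk, add_zero]
  map_smul' c x := by rw [← toLp_smul, Prod.smul_mk, smul_zero]; rfl
  norm_map' := norm_toLp_fst p E F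

def inrₗᵢ : F →ₗᵢ[𝕜] WithLp p (E × F) where
  toFun y := toLp p (0, y)
  map_add' x y := by rw [← toLp_add, Prod.mk_add_mk, add_zero]
  map_smul' c x := by rw [← toLp_smul, Prod.smul_mk, smul_zero]; rfl
  norm_map' := norm_toLp_snd p E F

end WithLp

section Universal

variable {E F : Type*} [NormedAddCommGroup E] [InnerProductSpace ℂ E]
  [NormedAddCommGroup F] [InnerProductSpace ℂ F]

theorem IsUniversal.not_injective [Nontrivial E] {U : E →L[ℂ] E} (hU : IsUniversal U) :
    ¬ Function.Injective U := by
  intro hinj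
  obtain ⟨M, -, -, c, -, J, hJ⟩ := hU 0
  obtain ⟨x, hx⟩ := exists_ne (0 : E)
  have hJx : (J x : E) = 0 := hinj (by simpa using hJ x)
  exact hx (J.injective (Subtype.ext (by simpa using hJx)))

theorem IsUniversal.of_intertwining [CompleteSpace E] {U : E →L[ℂ] E} (hU : IsUniversal U)
    (Φ : F ≃L[ℂ] E) (ι : E →ₗᵢ[ℂ] F) {V : F →L[ℂ] F} (hV : ∀ x, V (ι x) = ι (U x)) :
    IsUniversal V := by
  intro T
  obtain ⟨M, hM, hUM, c, hc, J, hJ⟩ := hU ((Φ : F →L[ℂ] E) ∘L T ∘L (Φ.symm : E →L[ℂ] F))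
  let ιM : M ≃ₗᵢ[ℂ] M.map (ι : E →ₗ[ℂ] F) :=
    .ofSurjective (ι.submoduleMap M) (by rintro ⟨_, x, hx, rfl⟩; exact ⟨⟨x, hx⟩, rfl⟩)
  refine ⟨M.map (ι : E →ₗ[ℂ] F), ?_, ?_, c, hc, Φ.trans (J.trans ιM.toContinuousLinearEquiv), ?_⟩
  · rw [Submodule.map_coe]
    exact ι.isometry.isClosedEmbedding.isClosedMap _ hM
  · rintro _ ⟨x, hx, rfl⟩
    exact ⟨U x, hUM x hx, (hV x).symm⟩
  · intro x
    change V (ι (J (Φ x))) = c • ι (J (Φ (T x)))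
    simpa [hV] using congrArg ι (hJ (Φ x))

end Universal

section DirectSum

variable {H : Type*} [NormedAddCommGroup H] [InnerProductSpace ℂ H]

theorem mkPair_fst_snd (z : WithLp 2 (H × H)) : mkPair z.fst z.snd = z := rfl

theorem injective_of_apply_mkPair {U K₀ : H →L[ℂ] H} (hK₀ : Function.Injective K₀)
    {W : WithLp 2 (H × H) →L[ℂ] WithLp 2 (H × H)}
    (hW : ∀ x y : H, W (mkPair x y) = mkPair (U x + y) (K₀ x)) : Function.Injective W := by
  refine (injective_iff_map_eq_zero W).2 fun z hz => ?_
  rw [← mkPair_fst_snd z, hW] at hz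
  obtain ⟨h₁, h₂⟩ : U z.fst + z.snd = 0 ∧ K₀ z.fst = 0 :=
    Prod.ext_iff.1 (congrArg WithLp.ofLp hz)
  have hfst : z.fst = 0 := hK₀ (h₂.trans K₀.map_zero.symm)
  have hsnd : z.snd = 0 := by rwa [hfst, map_zero, zero_add] at h₁
  exact WithLp.ofLp_injective 2 (Prod.ext hfst hsnd)

theorem sub_eq_inr_comp_fst_of_apply_mkPair {U K₀ : H →L[ℂ] H}
    {V W : WithLp 2 (H × H) →L[ℂ] WithLp 2 (H × H)}
    (hV : ∀ x y : H, V (mkPair x y) = mkPair (U x + y) 0)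
    (hW : ∀ x y : H, W (mkPair x y) = mkPair (U x + y) (K₀ x)) :
    W - V = (WithLp.inrₗᵢ 2 ℂ H H).toContinuousLinearMap ∘L K₀ ∘L WithLp.fstL 2 ℂ H H := by
  ext z
  rw [sub_apply, ← mkPair_fst_snd z, hW, hV, mkPair, mkPair, WithLp.equiv_symm_apply,
    ← WithLp.toLp_sub, Prod.mk_sub_mk, sub_self, sub_zero]
  rfl

end DirectSum

/-- Let `U` be universal on `H`, let `K₀` be an injective compact operator, and on `H ⊕ H`
let `V (x,y) = (U x + y, 0)` and `W (x,y) = (U x + y, K₀ x)`. Then `V` is universal, `W - V`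
is compact, and `W` is injective, hence not universal. Consequently the class of universal
operators is not invariant under compact perturbations. -/
theorem universal_not_invariant_under_compact_perturbation {H : Type*}
    [NormedAddCommGroup H] [InnerProductSpace ℂ H] [CompleteSpace H]
    [TopologicalSpace.SeparableSpace H]
    (hinf : ¬ FiniteDimensional ℂ H)
    (U : H →L[ℂ] H) (hU : IsUniversal U)
    (K₀ : H →L[ℂ] H) (hK₀c : IsCompactOperator K₀) (hK₀i : Function.Injective K₀)
    (V W : WithLp 2 (H × H) →L[ℂ] WithLp 2 (H × H))
    (hV : ∀ x y : H, V (mkPair x y) = mkPair (U x + y) 0)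
    (hW : ∀ x y : H, W (mkPair x y) = mkPair (U x + y) (K₀ x)) :
    IsUniversal V ∧
    IsCompactOperator (W - V) ∧
    Function.Injective W ∧
    ¬ IsUniversal W := by
  let ι := WithLp.inlₗᵢ 2 ℂ H H
  have hVι : ∀ x, V (ι x) = ι (U x) := fun x => (hV x 0).trans (by rw [add_zero]; rfl)
  have hinf₂ : ¬ FiniteDimensional ℂ (WithLp 2 (H × H)) :=
    fun _ => hinf (.of_injective ι.toLinearMap ι.injective)
  have : Nontrivial (WithLp 2 (H × H)) :=
    not_subsingleton_iff_nontrivial.1 fun _ => hinf₂ inferInstance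
  obtain ⟨Φ⟩ := nonempty_continuousLinearEquiv_of_not_finiteDimensional hinf₂ hinf
  have hWinj : Function.Injective W := injective_of_apply_mkPair hK₀i hW
  refine ⟨hU.of_intertwining Φ ι hVι, ?_, hWinj, fun hWu => hWu.not_injective hWinj⟩
  rw [sub_eq_inr_comp_fst_of_apply_mkPair hV hW]
  exact (hK₀c.comp_clm (WithLp.fstL 2 ℂ H H)).clm_comp
    (WithLp.inrₗᵢ 2 ℂ H H).toContinuousLinearMap

end
end
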